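/- arXiv:math/0408045 — 3 statements merged into one kernel-verified Lean document; each statement's English description precedes it below -/
import Mathlib

section
/- Let T be a double groupoid and let A, B, X, Y be boxes with XY = A over B (the horizontal composite XY equals the vertical composite of A on top of B). Then the number of quadruples (U,V,R,S) of boxes with UV = A, RS = B, U over R equal to X, and V over S equal to Y, equals the number of boxes with left side l(A) and top side t(X). -/
/-- A (finite) groupoid, presented algebraically: a set `A` of arrows over a base `P`,
with source `s`, target `e`, identities, a (total, junk-valued when undefined)
composition, and inverses. Composition is written left to right: `comp a b` is
defined when `e a = s b`. -/
structure Gpd (P : Type) (A : Type) where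
  s : A → P
  e : A → P
  id : P → A
  comp : A → A → A
  inv : A → A
  s_id : ∀ p, s (id p) = p
  e_id : ∀ p, e (id p) = p
  s_comp : ∀ a b, e a = s b → s (comp a b) = s a
  e_comp : ∀ a b, e a = s b → e (comp a b) = e b
  id_comp : ∀ a, comp (id (s a)) a = a
  comp_id : ∀ a, comp a (id (e a)) = a
  comp_assoc : ∀ a b c, e a = s b → e b = s c →
    comp (comp a b) c = comp a (comp b c)
  s_inv : ∀ a, s (inv a) = e a
  e_inv : ∀ a, e (inv a) = s a
  inv_comp : ∀ a, comp (inv a) a = id (e a)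
  comp_inv : ∀ a, comp a (inv a) = id (s a)

/-- A finite double groupoid: boxes `B`, horizontal arrows `H`, vertical arrows `V`,
points `P`; boxes carry a horizontal groupoid structure over `V`
(source = left side, target = right side) and a vertical groupoid structure over `H`
(source = top side, target = bottom side), compatible with the side groupoids,
satisfying the interchange law. -/
structure DoubleGroupoid where
  P : Type
  H : Type
  V : Type
  B : Type
  [fP : Fintype P]
  [fH : Fintype H]
  [fV : Fintype V]
  [fB : Fintype B]
  [dP : DecidableEq P]
  [dH : DecidableEq H]
  [dV : DecidableEq V]
  [dB : DecidableEq B]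
  /-- horizontal arrows: source `s` = left point, target `e` = right point -/
  gH : Gpd P H
  /-- vertical arrows: source `s` = top point, target `e` = bottom point -/
  gV : Gpd P V
  /-- horizontal composition of boxes; base `V`, source = left side, target = right side -/
  gBh : Gpd V B
  /-- vertical composition of boxes; base `H`, source = top side, target = bottom side -/
  gBv : Gpd H B
  corner_tl : ∀ A, gH.s (gBv.s A) = gV.s (gBh.s A)
  corner_tr : ∀ A, gH.e (gBv.s A) = gV.s (gBh.e A)
  corner_bl : ∀ A, gH.s (gBv.e A) = gV.e (gBh.s A)
  corner_br : ∀ A, gH.e (gBv.e A) = gV.e (gBh.e A)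
  t_hcomp : ∀ A B, gBh.e A = gBh.s B →
    gBv.s (gBh.comp A B) = gH.comp (gBv.s A) (gBv.s B)
  b_hcomp : ∀ A B, gBh.e A = gBh.s B →
    gBv.e (gBh.comp A B) = gH.comp (gBv.e A) (gBv.e B)
  l_vcomp : ∀ A B, gBv.e A = gBv.s B →
    gBh.s (gBv.comp A B) = gV.comp (gBh.s A) (gBh.s B)
  r_vcomp : ∀ A B, gBv.e A = gBv.s B →
    gBh.e (gBv.comp A B) = gV.comp (gBh.e A) (gBh.e B)
  t_idh : ∀ g, gBv.s (gBh.id g) = gH.id (gV.s g)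
  b_idh : ∀ g, gBv.e (gBh.id g) = gH.id (gV.e g)
  l_idv : ∀ x, gBh.s (gBv.id x) = gV.id (gH.s x)
  r_idv : ∀ x, gBh.e (gBv.id x) = gV.id (gH.e x)
  t_hinv : ∀ A, gBv.s (gBh.inv A) = gH.inv (gBv.s A)
  b_hinv : ∀ A, gBv.e (gBh.inv A) = gH.inv (gBv.e A)
  l_vinv : ∀ A, gBh.s (gBv.inv A) = gV.inv (gBh.s A)
  r_vinv : ∀ A, gBh.e (gBv.inv A) = gV.inv (gBh.e A)
  hinv_vinv : ∀ A, gBh.inv (gBv.inv A) = gBv.inv (gBh.inv A)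
  idh_vcomp : ∀ g h, gV.e g = gV.s h →
    gBv.comp (gBh.id g) (gBh.id h) = gBh.id (gV.comp g h)
  idv_hcomp : ∀ x y, gH.e x = gH.s y →
    gBh.comp (gBv.id x) (gBv.id y) = gBv.id (gH.comp x y)
  id_id : ∀ p, gBh.id (gV.id p) = gBv.id (gH.id p)
  interchange : ∀ A B C D,
    gBh.e A = gBh.s B → gBh.e C = gBh.s D →
    gBv.e A = gBv.s C → gBv.e B = gBv.s D →
    gBv.comp (gBh.comp A B) (gBh.comp C D) =
      gBh.comp (gBv.comp A C) (gBv.comp B D)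

namespace DoubleGroupoid

instance (T : DoubleGroupoid) : Fintype T.P := T.fP
instance (T : DoubleGroupoid) : Fintype T.H := T.fH
instance (T : DoubleGroupoid) : Fintype T.V := T.fV
instance (T : DoubleGroupoid) : Fintype T.B := T.fB
instance (T : DoubleGroupoid) : DecidableEq T.P := T.dP
instance (T : DoubleGroupoid) : DecidableEq T.H := T.dH
instance (T : DoubleGroupoid) : DecidableEq T.V := T.dV
instance (T : DoubleGroupoid) : DecidableEq T.B := T.dB

variable (T : DoubleGroupoid)

/-- top side of a box -/
def top (A : T.B) : T.H := T.gBv.s A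
/-- bottom side of a box -/
def bot (A : T.B) : T.H := T.gBv.e A
/-- left side of a box -/
def left (A : T.B) : T.V := T.gBh.s A
/-- right side of a box -/
def right (A : T.B) : T.V := T.gBh.e A

/-- horizontal composition -/
def hcomp (A B : T.B) : T.B := T.gBh.comp A B
/-- vertical composition ("A over B") -/
def vcomp (A B : T.B) : T.B := T.gBv.comp A B
/-- horizontal inverse -/
def hinv (A : T.B) : T.B := T.gBh.inv A
/-- vertical inverse -/
def vinv (A : T.B) : T.B := T.gBv.inv A
/-- total inverse `A⁻¹ = (Aʰ)ᵛ` -/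
def tinv (A : T.B) : T.B := T.gBv.inv (T.gBh.inv A)

/-- top-left vertex -/
def tl (A : T.B) : T.P := T.gH.s (T.top A)
/-- top-right vertex -/
def tr (A : T.B) : T.P := T.gH.e (T.top A)
/-- bottom-left vertex -/
def bl (A : T.B) : T.P := T.gH.s (T.bot A)
/-- bottom-right vertex -/
def br (A : T.B) : T.P := T.gH.e (T.bot A)
/-- right-top vertex (equal to `tr` by the corner compatibilities) -/
def rt (A : T.B) : T.P := T.gV.s (T.right A)
/-- right-bottom vertex -/
def rb (A : T.B) : T.P := T.gV.e (T.right A)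
/-- left-top vertex -/
def lt (A : T.B) : T.P := T.gV.s (T.left A)
/-- left-bottom vertex -/
def lb (A : T.B) : T.P := T.gV.e (T.left A)

/-- upper-left corner function: number of boxes with the same left and top sides -/
noncomputable def ulc (A : T.B) : ℕ :=
  Nat.card {U : T.B // T.left U = T.left A ∧ T.top U = T.top A}
/-- upper-right corner function: number of boxes with the same right and top sides -/
noncomputable def urc (A : T.B) : ℕ :=
  Nat.card {U : T.B // T.right U = T.right A ∧ T.top U = T.top A}
/-- lower-left corner function: number of boxes with the same left and bottom sides -/
noncomputable def llc (A : T.B) : ℕ :=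
  Nat.card {U : T.B // T.left U = T.left A ∧ T.bot U = T.bot A}
/-- lower-right corner function: number of boxes with the same right and bottom sides -/
noncomputable def lrc (A : T.B) : ℕ :=
  Nat.card {U : T.B // T.right U = T.right A ∧ T.bot U = T.bot A}

/-- the double identity box `Θ_P` at a point -/
def thetaBox (p : T.P) : T.B := T.gBv.id (T.gH.id p)

/-- the filling condition: every compatible pair (right side, top side) bounds a box -/
def Filling : Prop :=
  ∀ (g : T.V) (x : T.H), T.gH.e x = T.gV.s g →
    ∃ A : T.B, T.top A = x ∧ T.right A = g

/-- membership in the core groupoid `D`: the left and bottom sides are identities -/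
def isCoreD (D : T.B) : Prop :=
  T.left D = T.gV.id (T.gV.s (T.left D)) ∧ T.bot D = T.gH.id (T.gH.s (T.bot D))

/-- membership in the core groupoid `E`: the right and top sides are identities -/
def isCoreE (E : T.B) : Prop :=
  T.right E = T.gV.id (T.gV.s (T.right E)) ∧ T.top E = T.gH.id (T.gH.s (T.top E))

/-- `θ(p)`: the number of boxes whose left and bottom sides are identities at `p` -/
noncomputable def thetaLB (p : T.P) : ℕ :=
  Nat.card {U : T.B // T.left U = T.gV.id p ∧ T.bot U = T.gH.id p}

end DoubleGroupoid

section Aux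

variable {P A : Type} (G : Gpd P A)

lemma Gpd.inv_comp_cancel (a b : A) (h : G.e a = G.s b) :
    G.comp (G.inv a) (G.comp a b) = b := by
  rw [← G.comp_assoc (G.inv a) a b (G.e_inv a) h, G.inv_comp a, h, G.id_comp]

lemma Gpd.comp_inv_cancel (a c : A) (h : G.s a = G.s c) :
    G.comp a (G.comp (G.inv a) c) = c := by
  rw [← G.comp_assoc a (G.inv a) c (G.s_inv a).symm (by rw [G.e_inv, h]),
    G.comp_inv, h, G.id_comp]

lemma Gpd.eq_inv_of (a c : A) (h1 : G.e a = G.s c) (h2 : G.comp a c = G.id (G.s a)) :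
    c = G.inv a := by
  have h3 := G.inv_comp_cancel a c h1
  rw [h2, ← G.e_inv a, G.comp_id] at h3
  exact h3.symm

end Aux

namespace DoubleGroupoid

variable (T : DoubleGroupoid)

lemma vinv_hcomp (U V : T.B) (h : T.gBh.e U = T.gBh.s V) :
    T.gBv.inv (T.gBh.comp U V) = T.gBh.comp (T.gBv.inv U) (T.gBv.inv V) := by
  have hiv : T.gBh.e (T.gBv.inv U) = T.gBh.s (T.gBv.inv V) := by
    rw [T.r_vinv, T.l_vinv, h]
  have hUt : T.gH.e (T.gBv.s U) = T.gH.s (T.gBv.s V) := by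
    rw [T.corner_tr U, h, ← T.corner_tl V]
  symm
  apply T.gBv.eq_inv_of
  · rw [T.b_hcomp U V h, T.t_hcomp _ _ hiv, T.gBv.s_inv, T.gBv.s_inv]
  · rw [T.interchange U V (T.gBv.inv U) (T.gBv.inv V) h hiv (T.gBv.s_inv U).symm
      (T.gBv.s_inv V).symm, T.gBv.comp_inv, T.gBv.comp_inv, T.idv_hcomp _ _ hUt,
      T.t_hcomp U V h]

/-- All eight conditions for the quadruple built from `U`. -/
lemma build (A B X Y : T.B)
    (hXY : T.gBh.e X = T.gBh.s Y) (hAB : T.gBv.e A = T.gBv.s B)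
    (h : T.gBh.comp X Y = T.gBv.comp A B)
    (U : T.B) (hU1 : T.gBh.s U = T.gBh.s A) (hU2 : T.gBv.s U = T.gBv.s X) :
    T.gBh.e U = T.gBh.s (T.gBh.comp (T.gBh.inv U) A) ∧
    T.gBh.e (T.gBv.comp (T.gBv.inv U) X) =
      T.gBh.s (T.gBv.comp (T.gBv.inv (T.gBh.comp (T.gBh.inv U) A)) Y) ∧
    T.gBv.e U = T.gBv.s (T.gBv.comp (T.gBv.inv U) X) ∧
    T.gBv.e (T.gBh.comp (T.gBh.inv U) A) =
      T.gBv.s (T.gBv.comp (T.gBv.inv (T.gBh.comp (T.gBh.inv U) A)) Y) ∧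
    T.gBh.comp U (T.gBh.comp (T.gBh.inv U) A) = A ∧
    T.gBh.comp (T.gBv.comp (T.gBv.inv U) X)
      (T.gBv.comp (T.gBv.inv (T.gBh.comp (T.gBh.inv U) A)) Y) = B ∧
    T.gBv.comp U (T.gBv.comp (T.gBv.inv U) X) = X ∧
    T.gBv.comp (T.gBh.comp (T.gBh.inv U) A)
      (T.gBv.comp (T.gBv.inv (T.gBh.comp (T.gBh.inv U) A)) Y) = Y := by
  set V := T.gBh.comp (T.gBh.inv U) A with hV
  set R := T.gBv.comp (T.gBv.inv U) X with hR
  -- basic compatibilities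
  have hUV : T.gBh.e (T.gBh.inv U) = T.gBh.s A := by rw [T.gBh.e_inv, hU1]
  have hUR : T.gBv.e (T.gBv.inv U) = T.gBv.s X := by rw [T.gBv.e_inv, hU2]
  have c1 : T.gBh.e U = T.gBh.s V := by
    rw [hV, T.gBh.s_comp _ _ hUV, T.gBh.s_inv]
  have hcompXY_t : T.gH.e (T.gBv.s X) = T.gH.s (T.gBv.s Y) := by
    rw [T.corner_tr X, hXY, ← T.corner_tl Y]
  have htX : T.gH.comp (T.gBv.s X) (T.gBv.s Y) = T.gBv.s A := by
    rw [← T.t_hcomp X Y hXY, h, T.gBv.s_comp A B hAB]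
  have htY : T.gBv.s Y = T.gH.comp (T.gH.inv (T.gBv.s X)) (T.gBv.s A) := by
    rw [← htX, T.gH.inv_comp_cancel _ _ hcompXY_t]
  have hVY : T.gBv.s V = T.gBv.s Y := by
    rw [hV, T.t_hcomp _ _ hUV, T.t_hinv, hU2, ← htY]
  have hVS : T.gBv.e (T.gBv.inv V) = T.gBv.s Y := by rw [T.gBv.e_inv, hVY]
  set S := T.gBv.comp (T.gBv.inv V) Y with hS
  have c3 : T.gBv.e U = T.gBv.s R := by
    rw [hR, T.gBv.s_comp _ _ hUR, T.gBv.s_inv]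
  have c4 : T.gBv.e V = T.gBv.s S := by
    rw [hS, T.gBv.s_comp _ _ hVS, T.gBv.s_inv]
  have c2 : T.gBh.e R = T.gBh.s S := by
    rw [hR, hS, T.r_vcomp _ _ hUR, T.l_vcomp _ _ hVS, T.r_vinv, T.l_vinv, hXY, c1]
  have c5 : T.gBh.comp U V = A := T.gBh.comp_inv_cancel U A hU1
  have c7 : T.gBv.comp U R = X := T.gBv.comp_inv_cancel U X hU2
  have c8 : T.gBv.comp V S = Y := T.gBv.comp_inv_cancel V Y hVY
  have c6 : T.gBh.comp R S = B := by
    have hiv : T.gBh.e (T.gBv.inv U) = T.gBh.s (T.gBv.inv V) := by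
      rw [T.r_vinv, T.l_vinv, c1]
    rw [hR, hS, ← T.interchange (T.gBv.inv U) (T.gBv.inv V) X Y hiv hXY hUR hVS,
      ← T.vinv_hcomp U V c1, c5, h, T.gBv.inv_comp_cancel A B hAB]
  exact ⟨c1, c2, c3, c4, c5, c6, c7, c8⟩

end DoubleGroupoid

/-- if `XY = (A over B)` then the number of double factorizations
`(U,V,R,S)` of this common product equals the number of boxes with left side `l(A)`
and top side `t(X)`. -/
theorem stmt1 (T : DoubleGroupoid) (A B X Y : T.B)
    (hXY : T.right X = T.left Y) (hAB : T.bot A = T.top B)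
    (h : T.hcomp X Y = T.vcomp A B) :
    Nat.card {q : T.B × T.B × T.B × T.B //
      T.right q.1 = T.left q.2.1 ∧ T.right q.2.2.1 = T.left q.2.2.2 ∧
      T.bot q.1 = T.top q.2.2.1 ∧ T.bot q.2.1 = T.top q.2.2.2 ∧
      T.hcomp q.1 q.2.1 = A ∧ T.hcomp q.2.2.1 q.2.2.2 = B ∧
      T.vcomp q.1 q.2.2.1 = X ∧ T.vcomp q.2.1 q.2.2.2 = Y} =
    Nat.card {U : T.B // T.left U = T.left A ∧ T.top U = T.top X} := by
  apply Nat.card_congr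
  refine
    { toFun := fun q => ⟨q.1.1, ?_, ?_⟩
      invFun := fun U =>
        ⟨(U.1, T.gBh.comp (T.gBh.inv U.1) A, T.gBv.comp (T.gBv.inv U.1) X,
          T.gBv.comp (T.gBv.inv (T.gBh.comp (T.gBh.inv U.1) A)) Y),
          T.build A B X Y hXY hAB h U.1 U.2.1 U.2.2⟩
      left_inv := ?_
      right_inv := ?_ }
  · obtain ⟨⟨q1, q2, q3, q4⟩, h1, h2, h3, h4, h5, h6, h7, h8⟩ := q
    have h1' : T.gBh.e q1 = T.gBh.s q2 := h1
    have h5' : T.gBh.comp q1 q2 = A := h5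
    show T.gBh.s q1 = T.gBh.s A
    rw [← h5', T.gBh.s_comp _ _ h1']
  · obtain ⟨⟨q1, q2, q3, q4⟩, h1, h2, h3, h4, h5, h6, h7, h8⟩ := q
    have h3' : T.gBv.e q1 = T.gBv.s q3 := h3
    have h7' : T.gBv.comp q1 q3 = X := h7
    show T.gBv.s q1 = T.gBv.s X
    rw [← h7', T.gBv.s_comp _ _ h3']
  · rintro ⟨⟨U, V, R, S⟩, h1, h2, h3, h4, h5, h6, h7, h8⟩
    have h1' : T.gBh.e U = T.gBh.s V := h1
    have h3' : T.gBv.e U = T.gBv.s R := h3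
    have h4' : T.gBv.e V = T.gBv.s S := h4
    have h5' : T.gBh.comp U V = A := h5
    have h7' : T.gBv.comp U R = X := h7
    have h8' : T.gBv.comp V S = Y := h8
    have hV : T.gBh.comp (T.gBh.inv U) A = V := by
      rw [← h5']; exact T.gBh.inv_comp_cancel U V h1'
    have hR : T.gBv.comp (T.gBv.inv U) X = R := by
      rw [← h7']; exact T.gBv.inv_comp_cancel U R h3'
    have hS : T.gBv.comp (T.gBv.inv V) Y = S := by
      rw [← h8']; exact T.gBv.inv_comp_cancel V S h4'
    exact Subtype.ext (by simp only [hV, hR, hS])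
  · rintro ⟨U, hU⟩
    rfl
end

section
/- In a double groupoid, the four corner functions evaluated on a box L depend only on the vertex of L opposite to the corner: ⌜(L) = θ(br(L)), ⌞(L) = θ(rt(L)), ⌝(L) = θ(bl(L)), ⌟(L) = θ(tl(L)), where θ(P) is the number of boxes whose left and top (equivalently, any fixed pair of adjacent) sides are identities at the point P. -/
/-- `θ(p)`: the number of boxes whose left and top sides are identities at `p`. -/
noncomputable def DoubleGroupoid.thetaLT (T : DoubleGroupoid) (p : T.P) : ℕ :=
  Nat.card {U : T.B // T.left U = T.gV.id p ∧ T.top U = T.gH.id p}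

namespace Gpd

variable {P A : Type} (G : Gpd P A)

lemma inv_inv (a : A) : G.inv (G.inv a) = a := by
  have h1 : G.s (G.inv (G.inv a)) = G.s a := by rw [G.s_inv, G.e_inv]
  calc G.inv (G.inv a)
      = G.comp (G.id (G.s (G.inv (G.inv a)))) (G.inv (G.inv a)) := (G.id_comp _).symm
    _ = G.comp (G.comp a (G.inv a)) (G.inv (G.inv a)) := by rw [h1, G.comp_inv]
    _ = G.comp a (G.comp (G.inv a) (G.inv (G.inv a))) := by
        refine G.comp_assoc _ _ _ (G.s_inv a).symm ?_
        rw [G.s_inv]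
    _ = G.comp a (G.id (G.s (G.inv a))) := by rw [G.comp_inv]
    _ = a := by rw [G.s_inv, G.comp_id]

lemma cancel_left (a b : A) (h : G.e a = G.s b) :
    G.comp (G.inv a) (G.comp a b) = b := by
  rw [← G.comp_assoc _ _ _ (G.e_inv a) h, G.inv_comp, h, G.id_comp]

lemma cancel_left' (a b : A) (h : G.s a = G.s b) :
    G.comp a (G.comp (G.inv a) b) = b := by
  have := G.cancel_left (G.inv a) b (by rw [G.e_inv, h])
  rwa [G.inv_inv] at this

end Gpd

lemma card_congr_aux {α : Type} (f g : α → α) (p q : α → Prop)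
    (hf : ∀ a, p a → q (f a)) (hg : ∀ a, q a → p (g a))
    (hgf : ∀ a, p a → g (f a) = a) (hfg : ∀ a, q a → f (g a) = a) :
    Nat.card {a // p a} = Nat.card {a // q a} :=
  Nat.card_congr ⟨fun x => ⟨f x.1, hf _ x.2⟩, fun x => ⟨g x.1, hg _ x.2⟩,
    fun x => Subtype.ext (hgf _ x.2), fun x => Subtype.ext (hfg _ x.2)⟩

namespace DoubleGroupoid

variable (T : DoubleGroupoid)

lemma ulc_eq (L : T.B) : T.ulc L = T.thetaLT (T.br L) := by
  classical
  have hp : T.br L = T.gV.e (T.gBh.e L) := T.corner_br L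
  have htr : T.gH.e (T.gBv.s L) = T.gV.s (T.gBh.e L) := T.corner_tr L
  set r := T.gBh.e L with hr
  set t := T.gBv.s L with ht
  set K : T.B := T.gBv.inv (T.gBh.id r) with hK
  have hKtop : T.gBv.s K = T.gH.id (T.gV.e r) := by
    rw [hK, T.gBv.s_inv, T.b_idh]
  have hKbot : T.gBv.e K = T.gH.id (T.gV.s r) := by
    rw [hK, T.gBv.e_inv, T.t_idh]
  have hKleft : T.gBh.s K = T.gV.inv r := by
    rw [hK, T.l_vinv, T.gBh.s_id]
  unfold ulc thetaLT left top
  apply card_congr_aux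
    (fun U => T.gBv.comp K (T.gBh.comp (T.gBh.inv L) U))
    (fun W => T.gBh.comp L (T.gBv.comp (T.gBh.id r) W))
  · rintro U ⟨hUl, hUt⟩
    have hcmp : T.gBh.e (T.gBh.inv L) = T.gBh.s U := by rw [T.gBh.e_inv, hUl]
    have hX : T.gBv.s (T.gBh.comp (T.gBh.inv L) U) = T.gH.id (T.gV.s r) := by
      rw [T.t_hcomp _ _ hcmp, T.t_hinv, hUt, ← ht, T.gH.inv_comp, htr]
    have hKX : T.gBv.e K = T.gBv.s (T.gBh.comp (T.gBh.inv L) U) := by rw [hKbot, hX]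
    constructor
    · show T.gBh.s _ = _
      rw [T.l_vcomp _ _ hKX, hKleft, T.gBh.s_comp _ _ hcmp, T.gBh.s_inv, ← hr,
        T.gV.inv_comp, hp]
    · show T.gBv.s _ = _
      rw [T.gBv.s_comp _ _ hKX, hKtop, hp]
  · rintro W ⟨hWl, hWt⟩
    have hJW : T.gBv.e (T.gBh.id r) = T.gBv.s W := by rw [T.b_idh, hWt, hp]
    have hY : T.gBh.s (T.gBv.comp (T.gBh.id r) W) = r := by
      rw [T.l_vcomp _ _ hJW, T.gBh.s_id, hWl, hp, T.gV.comp_id]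
    have hLY : T.gBh.e L = T.gBh.s (T.gBv.comp (T.gBh.id r) W) := by rw [hY]
    constructor
    · show T.gBh.s _ = _
      rw [T.gBh.s_comp _ _ hLY]
    · show T.gBv.s _ = _
      rw [T.t_hcomp _ _ hLY, T.gBv.s_comp _ _ hJW, T.t_idh, ← htr, ← ht, T.gH.comp_id]
  · rintro U ⟨hUl, hUt⟩
    have hcmp : T.gBh.e (T.gBh.inv L) = T.gBh.s U := by rw [T.gBh.e_inv, hUl]
    have hX : T.gBv.s (T.gBh.comp (T.gBh.inv L) U) = T.gH.id (T.gV.s r) := by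
      rw [T.t_hcomp _ _ hcmp, T.t_hinv, hUt, ← ht, T.gH.inv_comp, htr]
    show T.gBh.comp L (T.gBv.comp (T.gBh.id r) (T.gBv.comp K (T.gBh.comp (T.gBh.inv L) U))) = U
    have h1 : T.gBv.comp (T.gBh.id r)
        (T.gBv.comp K (T.gBh.comp (T.gBh.inv L) U)) = T.gBh.comp (T.gBh.inv L) U := by
      rw [hK]
      exact T.gBv.cancel_left' _ _ (by rw [T.t_idh, hX])
    rw [h1]
    exact T.gBh.cancel_left' L U hUl.symm
  · rintro W ⟨hWl, hWt⟩
    have hJW : T.gBv.e (T.gBh.id r) = T.gBv.s W := by rw [T.b_idh, hWt, hp]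
    have hY : T.gBh.s (T.gBv.comp (T.gBh.id r) W) = r := by
      rw [T.l_vcomp _ _ hJW, T.gBh.s_id, hWl, hp, T.gV.comp_id]
    show T.gBv.comp K (T.gBh.comp (T.gBh.inv L) (T.gBh.comp L (T.gBv.comp (T.gBh.id r) W))) = W
    have h1 : T.gBh.comp (T.gBh.inv L)
        (T.gBh.comp L (T.gBv.comp (T.gBh.id r) W)) = T.gBv.comp (T.gBh.id r) W :=
      T.gBh.cancel_left _ _ (by rw [hY])
    rw [h1, hK]
    exact T.gBv.cancel_left _ _ (by rw [T.b_idh, hWt, hp])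

lemma llc_eq_ulc (L : T.B) : T.llc L = T.ulc (T.vinv L) := by
  unfold llc ulc left top bot vinv
  apply card_congr_aux (fun U => T.gBv.inv U) (fun W => T.gBv.inv W)
  · rintro U ⟨h1, h2⟩
    exact ⟨by rw [T.l_vinv, T.l_vinv, h1], by rw [T.gBv.s_inv, T.gBv.s_inv, h2]⟩
  · rintro W ⟨h1, h2⟩
    rw [T.l_vinv] at h1
    rw [T.gBv.s_inv] at h2
    constructor
    · rw [T.l_vinv, h1, T.gV.inv_inv]
    · rw [T.gBv.e_inv, h2]
  · rintro U _; exact T.gBv.inv_inv U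
  · rintro W _; exact T.gBv.inv_inv W

lemma urc_eq_ulc (L : T.B) : T.urc L = T.ulc (T.hinv L) := by
  unfold urc ulc left top right hinv
  apply card_congr_aux (fun U => T.gBh.inv U) (fun W => T.gBh.inv W)
  · rintro U ⟨h1, h2⟩
    exact ⟨by rw [T.gBh.s_inv, T.gBh.s_inv, h1], by rw [T.t_hinv, T.t_hinv, h2]⟩
  · rintro W ⟨h1, h2⟩
    rw [T.gBh.s_inv] at h1
    rw [T.t_hinv] at h2
    constructor
    · rw [T.gBh.e_inv, h1]
    · rw [T.t_hinv, h2, T.gH.inv_inv]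
  · rintro U _; exact T.gBh.inv_inv U
  · rintro W _; exact T.gBh.inv_inv W

lemma tinv_tinv (U : T.B) : T.tinv (T.tinv U) = U := by
  unfold tinv
  rw [← T.hinv_vinv, T.gBv.inv_inv, T.gBh.inv_inv]

lemma lrc_eq_ulc (L : T.B) : T.lrc L = T.ulc (T.tinv L) := by
  unfold lrc ulc left top right bot tinv
  apply card_congr_aux (fun U => T.gBv.inv (T.gBh.inv U)) (fun W => T.gBh.inv (T.gBv.inv W))
  · rintro U ⟨h1, h2⟩
    constructor
    · rw [T.l_vinv, T.l_vinv, T.gBh.s_inv, T.gBh.s_inv, h1]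
    · rw [T.gBv.s_inv, T.gBv.s_inv, T.b_hinv, T.b_hinv, h2]
  · rintro W ⟨h1, h2⟩
    rw [T.l_vinv, T.gBh.s_inv] at h1
    rw [T.gBv.s_inv, T.b_hinv] at h2
    constructor
    · show T.gBh.e (T.gBh.inv (T.gBv.inv W)) = T.gBh.e L
      rw [T.gBh.e_inv, T.l_vinv, h1, T.gV.inv_inv]
    · show T.gBv.e (T.gBh.inv (T.gBv.inv W)) = T.gBv.e L
      rw [T.b_hinv, T.gBv.e_inv, h2, T.gH.inv_inv]
  · rintro U _
    show T.gBh.inv (T.gBv.inv (T.gBv.inv (T.gBh.inv U))) = U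
    rw [T.gBv.inv_inv, T.gBh.inv_inv]
  · rintro W _
    show T.gBv.inv (T.gBh.inv (T.gBh.inv (T.gBv.inv W))) = W
    rw [T.gBh.inv_inv, T.gBv.inv_inv]

end DoubleGroupoid

/-- each corner function on a box depends only on the opposite vertex:
`⌜(L) = θ(br L)`, `⌞(L) = θ(rt L)`, `⌝(L) = θ(bl L)`, `⌟(L) = θ(tl L)`. -/
theorem stmt2 (T : DoubleGroupoid) (L : T.B) :
    T.ulc L = T.thetaLT (T.br L) ∧ T.llc L = T.thetaLT (T.rt L) ∧
    T.urc L = T.thetaLT (T.bl L) ∧ T.lrc L = T.thetaLT (T.tl L) := by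
  refine ⟨T.ulc_eq L, ?_, ?_, ?_⟩
  · rw [T.llc_eq_ulc, T.ulc_eq]
    congr 1
    show T.gH.e (T.gBv.e (T.gBv.inv L)) = T.gV.s (T.gBh.e L)
    rw [T.gBv.e_inv]
    exact T.corner_tr L
  · rw [T.urc_eq_ulc, T.ulc_eq]
    congr 1
    show T.gH.e (T.gBv.e (T.gBh.inv L)) = T.gH.s (T.gBv.e L)
    rw [T.b_hinv, T.gH.e_inv]
  · rw [T.lrc_eq_ulc, T.ulc_eq]
    congr 1
    show T.gH.e (T.gBv.e (T.gBv.inv (T.gBh.inv L))) = T.gH.s (T.gBv.s L)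
    rw [T.gBv.e_inv, T.t_hinv, T.gH.e_inv]
end

section
/- In a finite double groupoid, the corner functions are translation invariant: if X, Y, Z are boxes with X|Y (horizontally composable) and X over Z (vertically composable), then ⌝(XY) = ⌝(X), ⌝(X over Z) = ⌝(Z), ⌞(XY) = ⌞(Y), and ⌞(X over Z) = ⌞(X). -/
namespace Gpd
variable {P A : Type} (G : Gpd P A)

lemma cr1 (u y : A) (h : G.e u = G.e y) :
    G.comp (G.comp u (G.inv y)) y = u := by
  have h1 : G.e u = G.s (G.inv y) := by rw [G.s_inv]; exact h
  rw [G.comp_assoc u (G.inv y) y h1 (G.e_inv y), G.inv_comp, ← h, G.comp_id]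

lemma cr2 (v y : A) (h : G.e v = G.s y) :
    G.comp (G.comp v y) (G.inv y) = v := by
  rw [G.comp_assoc v y (G.inv y) h (G.s_inv y).symm, G.comp_inv, ← h, G.comp_id]

lemma cl1 (u x : A) (h : G.s u = G.e x) :
    G.comp (G.inv x) (G.comp x u) = u := by
  rw [← G.comp_assoc (G.inv x) x u (G.e_inv x) h.symm, G.inv_comp, ← h, G.id_comp]

lemma cl2 (u x : A) (h : G.s u = G.s x) :
    G.comp x (G.comp (G.inv x) u) = u := by
  rw [← G.comp_assoc x (G.inv x) u (G.s_inv x).symm (by rw [G.e_inv]; exact h.symm),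
    G.comp_inv, ← h, G.id_comp]

/-- translation bijection, target-side version -/
noncomputable def keyR {Q C : Type} (Gh : Gpd Q C) (τ : A → C)
    (τcomp : ∀ a b, G.e a = G.s b → τ (G.comp a b) = Gh.comp (τ a) (τ b))
    (τinv : ∀ a, τ (G.inv a) = Gh.inv (τ a))
    (hτ : ∀ a b, G.e a = G.s b → Gh.e (τ a) = Gh.s (τ b))
    (X Y : A) (h : G.e X = G.s Y) :
    {U : A // G.e U = G.e (G.comp X Y) ∧ τ U = τ (G.comp X Y)} ≃
      {U : A // G.e U = G.e X ∧ τ U = τ X} where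
  toFun := fun ⟨U, hr, ht⟩ => by
    refine ⟨G.comp U (G.inv Y), ?_, ?_⟩
    · have cU : G.e U = G.s (G.inv Y) := by
        rw [G.s_inv]; exact hr.trans (G.e_comp X Y h)
      rw [G.e_comp U (G.inv Y) cU, G.e_inv]; exact h.symm
    · have cU : G.e U = G.s (G.inv Y) := by
        rw [G.s_inv]; exact hr.trans (G.e_comp X Y h)
      rw [τcomp U (G.inv Y) cU, ht, τinv, τcomp X Y h]
      exact Gh.cr2 (τ X) (τ Y) (hτ X Y h)
  invFun := fun ⟨V, hr, ht⟩ => by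
    refine ⟨G.comp V Y, ?_, ?_⟩
    · rw [G.e_comp V Y (hr.trans h), G.e_comp X Y h]
    · rw [τcomp V Y (hr.trans h), ht, τcomp X Y h]
  left_inv := fun ⟨U, hr, ht⟩ => by
    apply Subtype.ext
    exact G.cr1 U Y (hr.trans (G.e_comp X Y h))
  right_inv := fun ⟨V, hr, ht⟩ => by
    apply Subtype.ext
    exact G.cr2 V Y (hr.trans h)

/-- translation bijection, source-side version -/
noncomputable def keyL {Q C : Type} (Gh : Gpd Q C) (τ : A → C)
    (τcomp : ∀ a b, G.e a = G.s b → τ (G.comp a b) = Gh.comp (τ a) (τ b))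
    (τinv : ∀ a, τ (G.inv a) = Gh.inv (τ a))
    (hτ : ∀ a b, G.e a = G.s b → Gh.e (τ a) = Gh.s (τ b))
    (X Y : A) (h : G.e X = G.s Y) :
    {U : A // G.s U = G.s (G.comp X Y) ∧ τ U = τ (G.comp X Y)} ≃
      {U : A // G.s U = G.s Y ∧ τ U = τ Y} where
  toFun := fun ⟨U, hs, ht⟩ => by
    refine ⟨G.comp (G.inv X) U, ?_, ?_⟩
    · have cU : G.e (G.inv X) = G.s U := by
        rw [G.e_inv, ← G.s_comp X Y h]; exact hs.symm
      rw [G.s_comp (G.inv X) U cU, G.s_inv]; exact h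
    · have cU : G.e (G.inv X) = G.s U := by
        rw [G.e_inv, ← G.s_comp X Y h]; exact hs.symm
      rw [τcomp (G.inv X) U cU, ht, τinv, τcomp X Y h]
      exact Gh.cl1 (τ Y) (τ X) (hτ X Y h).symm
  invFun := fun ⟨V, hs, ht⟩ => by
    refine ⟨G.comp X V, ?_, ?_⟩
    · rw [G.s_comp X V (h.trans hs.symm), G.s_comp X Y h]
    · rw [τcomp X V (h.trans hs.symm), ht, τcomp X Y h]
  left_inv := fun ⟨U, hs, ht⟩ => by
    apply Subtype.ext
    exact G.cl2 U X (hs.trans (G.s_comp X Y h))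
  right_inv := fun ⟨V, hs, ht⟩ => by
    apply Subtype.ext
    exact G.cl1 V X (hs.trans h.symm)

end Gpd

/-- translation invariance of the corner functions: if `X|Y` and
`X` over `Z`, then `⌝(XY) = ⌝(X)`, `⌝(X over Z) = ⌝(Z)`, `⌞(XY) = ⌞(Y)`,
`⌞(X over Z) = ⌞(X)`. -/
theorem stmt8 (T : DoubleGroupoid) (X Y Z : T.B)
    (hXY : T.right X = T.left Y) (hXZ : T.bot X = T.top Z) :
    T.urc (T.hcomp X Y) = T.urc X ∧
    T.urc (T.vcomp X Z) = T.urc Z ∧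
    T.llc (T.hcomp X Y) = T.llc Y ∧
    T.llc (T.vcomp X Z) = T.llc X := by
  have hXY' : T.gBh.e X = T.gBh.s Y := hXY
  have hXZ' : T.gBv.e X = T.gBv.s Z := hXZ
  have hτtop : ∀ a b, T.gBh.e a = T.gBh.s b → T.gH.e (T.gBv.s a) = T.gH.s (T.gBv.s b) := by
    intro a b hab; rw [T.corner_tr, T.corner_tl, hab]
  have hτbot : ∀ a b, T.gBh.e a = T.gBh.s b → T.gH.e (T.gBv.e a) = T.gH.s (T.gBv.e b) := by
    intro a b hab; rw [T.corner_br, T.corner_bl, hab]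
  have hτr : ∀ a b, T.gBv.e a = T.gBv.s b → T.gV.e (T.gBh.e a) = T.gV.s (T.gBh.e b) := by
    intro a b hab; rw [← T.corner_br, ← T.corner_tr, hab]
  have hτl : ∀ a b, T.gBv.e a = T.gBv.s b → T.gV.e (T.gBh.s a) = T.gV.s (T.gBh.s b) := by
    intro a b hab; rw [← T.corner_bl, ← T.corner_tl, hab]
  refine ⟨?_, ?_, ?_, ?_⟩
  · exact Nat.card_congr
      (T.gBh.keyR T.gH T.gBv.s T.t_hcomp T.t_hinv hτtop X Y hXY')
  · refine Nat.card_congr (Equiv.trans (Equiv.subtypeEquivRight (fun u => and_comm))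
      (Equiv.trans
        (T.gBv.keyL T.gV T.gBh.e T.r_vcomp T.r_vinv hτr X Z hXZ')
        (Equiv.subtypeEquivRight (fun u => and_comm))))
  · exact Nat.card_congr
      (T.gBh.keyL T.gH T.gBv.e T.b_hcomp T.b_hinv hτbot X Y hXY')
  · refine Nat.card_congr (Equiv.trans (Equiv.subtypeEquivRight (fun u => and_comm))
      (Equiv.trans
        (T.gBv.keyR T.gV T.gBh.s T.l_vcomp T.l_vinv hτl X Z hXZ')
        (Equiv.subtypeEquivRight (fun u => and_comm))))
end
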